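/- Let (A_m)_{m≥0} be a formal orbit portrait of valence N ≥ 2 with degrees (d_m)_{m≥1}, let m ≥ 0, and suppose A_m has exactly one critical complementary arc I = (a,b), of length ℓ. Then ℓ > 1 − 1/d_{m+1}; for every y ∈ ℝ/ℤ not in A_{m+1}, the number of x ∈ I with d_{m+1}·x = y equals d_{m+1} if y lies in the open arc (d_{m+1}·a, d_{m+1}·b), and equals d_{m+1} − 1 otherwise. -/

import Mathlib

/-- The unique representative in `[0,1)` of `b - a`; for `a ≠ b` this is the
unique representative of `b − a` in `(0,1)`, the length `ℓ(a,b)` of the arc from `a` to `b`. -/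
noncomputable def arcLen (a b : UnitAddCircle) : ℝ :=
  ((AddCircle.equivIco 1 0) (b - a) : ℝ)

/-- The open arc `(a,b) = {a + t : 0 < t < ℓ(a,b)}` in `ℝ/ℤ`. -/
def openArc (a b : UnitAddCircle) : Set UnitAddCircle :=
  {x | ∃ t : ℝ, 0 < t ∧ t < arcLen a b ∧ x = a + (t : UnitAddCircle)}

/-- `(a,b,c)` is in positive cyclic order: `ℓ(a,b) < ℓ(a,c)`. -/
def PosCyclic (a b c : UnitAddCircle) : Prop := arcLen a b < arcLen a c

/-- A formal orbit portrait of valence `N` with degrees `d`: a sequence of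
`N`-element subsets `A m` of `ℝ/ℤ` such that `θ ↦ d_{m+1}·θ` maps `A m`
bijectively onto `A (m+1)` and carries every triple of pairwise distinct points
of `A m` in positive cyclic order to a triple in positive cyclic order. -/
def IsFormalPortrait (N : ℕ) (d : ℕ → ℕ) (A : ℕ → Set UnitAddCircle) : Prop :=
  ∀ m : ℕ,
    (A m).Finite ∧ (A m).ncard = N ∧
    Set.BijOn (fun θ => d (m + 1) • θ) (A m) (A (m + 1)) ∧
    ∀ a ∈ A m, ∀ b ∈ A m, ∀ c ∈ A m, a ≠ b → a ≠ c → b ≠ c →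
      PosCyclic a b c →
        PosCyclic (d (m + 1) • a) (d (m + 1) • b) (d (m + 1) • c)

/-- `(a,b)` is a complementary arc of `A`: `a, b ∈ A`, `a ≠ b`, and the open
arc `(a,b)` contains no point of `A`. -/
def IsComplArc (A : Set UnitAddCircle) (a b : UnitAddCircle) : Prop :=
  a ≠ b ∧ a ∈ A ∧ b ∈ A ∧ openArc a b ∩ A = ∅

/-!
Every complementary arc of `A m` other than `(a, b)` is shorter than `1/d`, so `θ ↦ d • θ`
multiplies its length by `d`. Walking from `b` to `a` through these arcs, preservation of cyclic
order makes the image lengths add up: `ℓ(d•b, d•a) = d · ℓ(b, a) = d (1 - ℓ)`. As this is `< 1`,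
`ℓ > 1 - 1/d`, and the image arc `(d•a, d•b)` has length `dℓ - (d - 1)`. The preimages in `(a, b)`
of `y = d•a + s` are the points `a + (s + j)/d` with `j ∈ ℕ`, `s + j < dℓ`; there are
`⌈dℓ - s⌉` of them, which is `d` when `s < dℓ - (d - 1)` and `d - 1` otherwise.
-/

def PreservesPosCyclic (n : ℕ) (S : Set UnitAddCircle) : Prop :=
  ∀ p ∈ S, ∀ q ∈ S, ∀ r ∈ S, p ≠ q → p ≠ r → q ≠ r →
    PosCyclic p q r → PosCyclic (n • p) (n • q) (n • r)

lemma arcLen_add_coe (a : UnitAddCircle) (t : ℝ) : arcLen a (a + t) = Int.fract t := by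
  simp [arcLen, AddCircle.coe_equivIco_mk_apply]

lemma add_coe_arcLen (a x : UnitAddCircle) : a + (arcLen a x : UnitAddCircle) = x := by
  rw [arcLen, AddCircle.coe_equivIco, add_sub_cancel]

lemma arcLen_nonneg (a b : UnitAddCircle) : 0 ≤ arcLen a b :=
  ((AddCircle.equivIco 1 0) (b - a)).2.1

lemma arcLen_lt_one (a b : UnitAddCircle) : arcLen a b < 1 := by
  simpa [arcLen] using ((AddCircle.equivIco 1 0) (b - a)).2.2

lemma arcLen_injective (a : UnitAddCircle) : Function.Injective (arcLen a) := fun x y h => by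
  rw [← add_coe_arcLen a x, ← add_coe_arcLen a y, h]

@[simp]
lemma arcLen_self (a : UnitAddCircle) : arcLen a a = 0 := by
  simpa using arcLen_add_coe a 0

lemma arcLen_pos_iff {a b : UnitAddCircle} : 0 < arcLen a b ↔ a ≠ b := by
  refine ⟨?_, fun h => (arcLen_nonneg a b).lt_of_ne fun h0 => h (arcLen_injective a ?_)⟩
  · rintro h rfl
    simp at h
  · rw [arcLen_self, h0]

lemma arcLen_add_arcLen_swap {a b : UnitAddCircle} (h : a ≠ b) :
    arcLen a b + arcLen b a = 1 := by
  have hu := arcLen_pos_iff.mpr h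
  have hfract : Int.fract (arcLen a b) = arcLen a b :=
    Int.fract_eq_self.2 ⟨hu.le, arcLen_lt_one a b⟩
  have hba : a = b + ((-arcLen a b : ℝ) : UnitAddCircle) := by
    rw [AddCircle.coe_neg, ← sub_eq_add_neg, eq_sub_iff_add_eq, add_coe_arcLen]
  nth_rw 2 [hba]
  rw [arcLen_add_coe, Int.fract_neg (by rw [hfract]; exact hu.ne'), hfract]
  ring

lemma arcLen_add_arcLen_of_lt {a b c : UnitAddCircle} (h : arcLen a b < arcLen a c) :
    arcLen a b + arcLen b c = arcLen a c := by
  set u := arcLen a b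
  set v := arcLen a c
  have hc : c = b + ((v - u : ℝ) : UnitAddCircle) := by
    rw [← add_coe_arcLen a b, ← add_coe_arcLen a c, AddCircle.coe_sub]
    abel
  rw [hc, arcLen_add_coe, Int.fract_eq_self.2 ⟨by linarith,
    by linarith [arcLen_nonneg a b, arcLen_lt_one a c]⟩]
  ring

lemma arcLen_nsmul (n : ℕ) (a b : UnitAddCircle) :
    arcLen (n • a) (n • b) = Int.fract (n * arcLen a b) := by
  conv_lhs => rw [← add_coe_arcLen a b, smul_add, ← AddCircle.coe_nsmul, nsmul_eq_mul,
    arcLen_add_coe]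

lemma mem_openArc_iff {a b x : UnitAddCircle} :
    x ∈ openArc a b ↔ 0 < arcLen a x ∧ arcLen a x < arcLen a b := by
  constructor
  · rintro ⟨t, ht0, htl, rfl⟩
    rw [arcLen_add_coe, Int.fract_eq_self.2 ⟨ht0.le, htl.trans (arcLen_lt_one a b)⟩]
    exact ⟨ht0, htl⟩
  · rintro ⟨h0, hl⟩
    exact ⟨arcLen a x, h0, hl, (add_coe_arcLen a x).symm⟩

lemma openArc_subset_openArc {x y a : UnitAddCircle} (hy : y ∈ openArc x a) :
    openArc y a ⊆ openArc x a := by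
  intro z hz
  rw [mem_openArc_iff] at hy hz ⊢
  have hya := arcLen_add_arcLen_of_lt hy.2
  have hyz : arcLen x y < arcLen x z := by
    by_contra! hzy
    have hne : y ≠ z := arcLen_pos_iff.mp hz.1
    rcases hzy.lt_or_eq with hzy | hzy
    · have := arcLen_add_arcLen_of_lt hzy
      linarith [arcLen_add_arcLen_swap hne, arcLen_nonneg x z, arcLen_lt_one x a]
    · exact hne (arcLen_injective x hzy).symm
  have := arcLen_add_arcLen_of_lt hyz
  constructor <;> linarith

lemma exists_mem_openArc_isComplArc {S : Set UnitAddCircle} (hS : S.Finite)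
    {x a : UnitAddCircle} (hx : x ∈ S) (hne : (openArc x a ∩ S).Nonempty) :
    ∃ y ∈ openArc x a ∩ S, IsComplArc S x y := by
  obtain ⟨y, hy, hmin⟩ := Set.exists_min_image _ (arcLen x) (hS.inter_of_right _) hne
  refine ⟨y, hy, ?_, hx, hy.2, Set.eq_empty_of_forall_notMem ?_⟩
  · rintro rfl
    simpa using (mem_openArc_iff.mp hy.1).1
  · rintro z ⟨hz, hzS⟩
    rw [mem_openArc_iff] at hz
    have hy' := mem_openArc_iff.mp hy.1
    have := hmin z ⟨mem_openArc_iff.mpr ⟨hz.1, hz.2.trans hy'.2⟩, hzS⟩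
    linarith [hz.2]

lemma arcLen_nsmul_eq_mul_of_forall_isComplArc {S : Set UnitAddCircle} (hS : S.Finite) {n : ℕ}
    (hcyc : PreservesPosCyclic n S) {a : UnitAddCircle} (ha : a ∈ S)
    (hmul : ∀ p q, IsComplArc S p q → p ≠ a → arcLen (n • p) (n • q) = n * arcLen p q)
    {x : UnitAddCircle} (hx : x ∈ S) (hxa : x ≠ a) :
    arcLen (n • x) (n • a) = n * arcLen x a := by
  induction hk : (openArc x a ∩ S).ncard using Nat.strong_induction_on generalizing x with
  | _ k ih =>
  rcases (openArc x a ∩ S).eq_empty_or_nonempty with hempty | hne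
  · exact hmul x a ⟨hxa, hx, ha, hempty⟩ hxa
  obtain ⟨y, ⟨hy, hyS⟩, hxy⟩ := exists_mem_openArc_isComplArc hS hx hne
  have hya : y ≠ a := by
    rintro rfl
    exact (mem_openArc_iff.mp hy).2.false
  have hlt : (openArc y a ∩ S).ncard < k := by
    rw [← hk]
    refine Set.ncard_lt_ncard ?_ (hS.inter_of_right _)
    refine (Set.ssubset_iff_of_subset
      (Set.inter_subset_inter_left _ (openArc_subset_openArc hy))).mpr ⟨y, ⟨hy, hyS⟩, ?_⟩
    simp [mem_openArc_iff]
  have hxya : PosCyclic x y a := (mem_openArc_iff.mp hy).2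
  have himage := hcyc x hx y hyS a ha hxy.1 hxa hya hxya
  rw [← arcLen_add_arcLen_of_lt himage, ← arcLen_add_arcLen_of_lt hxya, hmul x y hxy hxa,
    ih _ hlt hyS hya rfl, mul_add]

lemma arcLen_nsmul_of_mul_le_one {n : ℕ} {p q : UnitAddCircle} (h : n * arcLen p q ≤ 1)
    (hpq : n • p ≠ n • q) : arcLen (n • p) (n • q) = n * arcLen p q := by
  rw [arcLen_nsmul]
  refine Int.fract_eq_self.2
    ⟨mul_nonneg n.cast_nonneg (arcLen_nonneg p q), h.lt_of_ne fun h1 => hpq ?_⟩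
  exact arcLen_injective (n • p) (by rw [arcLen_self, arcLen_nsmul, h1, Int.fract_one])

lemma ncard_openArc_inter_nsmul_eq_ceil {n : ℕ} (hn : 0 < n) {a b y : UnitAddCircle}
    (hy : y ≠ n • a) :
    {x | x ∈ openArc a b ∧ n • x = y}.ncard = ⌈n * arcLen a b - arcLen (n • a) y⌉₊ := by
  set s := arcLen (n • a) y
  have hs : 0 < s := arcLen_pos_iff.mpr hy.symm
  have hnR : (0 : ℝ) < n := by exact_mod_cast hn
  have hℓ := arcLen_lt_one a b
  set f : ℕ → UnitAddCircle := fun j => a + ((s + j) / n : ℝ)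
  have hf : ∀ j : ℕ, (j : ℝ) < n * arcLen a b - s → arcLen a (f j) = (s + j) / n := by
    intro j hj
    rw [arcLen_add_coe, Int.fract_eq_self, le_div_iff₀ hnR, div_lt_iff₀ hnR]
    constructor <;> nlinarith
  have hset : {x | x ∈ openArc a b ∧ n • x = y} = f '' Set.Iio ⌈n * arcLen a b - s⌉₊ := by
    ext x
    simp only [Set.mem_ofPred_eq, Set.mem_image, Set.mem_Iio, Nat.lt_ceil, mem_openArc_iff]
    constructor
    · rintro ⟨⟨hx0, hxℓ⟩, rfl⟩
      have hfract : Int.fract (n * arcLen a x) = s := (arcLen_nsmul n a x).symm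
      have hnx : n * arcLen a x = s + ⌊n * arcLen a x⌋₊ := by
        rw [natCast_floor_eq_intCast_floor (by positivity), ← hfract, Int.fract_add_floor]
      have hj : (⌊n * arcLen a x⌋₊ : ℝ) < n * arcLen a b - s := by nlinarith
      refine ⟨_, hj, arcLen_injective a ?_⟩
      rw [hf _ hj, ← hnx]
      field_simp
    · rintro ⟨j, hj, rfl⟩
      rw [hf j hj, div_lt_iff₀ hnR]
      refine ⟨⟨by positivity, by linarith⟩, arcLen_injective (n • a) ?_⟩
      rw [arcLen_nsmul, hf j hj, mul_div_cancel₀ _ hnR.ne', Int.fract_add_natCast,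
        Int.fract_eq_self.2 ⟨hs.le, arcLen_lt_one _ _⟩]
  have hinj : Set.InjOn f (Set.Iio ⌈n * arcLen a b - s⌉₊) := by
    intro i hi j hj hij
    rw [Set.mem_Iio, Nat.lt_ceil] at hi hj
    have := congrArg (arcLen a) hij
    rw [hf i hi, hf j hj, div_left_inj' hnR.ne', add_right_inj] at this
    exact_mod_cast this
  rw [hset, hinj.ncard_image, ← Finset.coe_range, Set.ncard_coe_finset, Finset.card_range]

lemma arcLen_nsmul_of_unique_critical {S : Set UnitAddCircle} (hS : S.Finite) {n : ℕ}
    (hn : 0 < n) (hinj : Set.InjOn (fun θ => n • θ) S) (hcyc : PreservesPosCyclic n S)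
    {a b : UnitAddCircle} (hab : IsComplArc S a b)
    (huniq : ∀ p q, IsComplArc S p q → 1 / (n : ℝ) < arcLen p q → p = a ∧ q = b) :
    arcLen (n • a) (n • b) = n * arcLen a b - (n - 1) := by
  obtain ⟨hab, ha, hb, -⟩ := hab
  have hmul (p q) (hpq : IsComplArc S p q) (hpa : p ≠ a) :
      arcLen (n • p) (n • q) = n * arcLen p q := by
    refine arcLen_nsmul_of_mul_le_one ?_ (hinj.ne hpq.2.1 hpq.2.2.1 hpq.1)
    have := not_lt.mp fun h => hpa (huniq p q hpq h).1
    rwa [le_div_iff₀ (by exact_mod_cast hn), mul_comm] at this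
  linear_combination arcLen_add_arcLen_swap (hinj.ne ha hb hab) -
    arcLen_nsmul_eq_mul_of_forall_isComplArc hS hcyc ha hmul hb hab.symm -
    n * arcLen_add_arcLen_swap hab

section Counting

variable {n : ℕ} {a b y : UnitAddCircle}

lemma ncard_openArc_inter_nsmul_of_mem (hn : 0 < n) (hy : y ≠ n • a)
    (himage : arcLen (n • a) (n • b) = n * arcLen a b - (n - 1))
    (hmem : y ∈ openArc (n • a) (n • b)) :
    {x | x ∈ openArc a b ∧ n • x = y}.ncard = n := by
  rw [mem_openArc_iff, himage] at hmem
  have hnℓ : (n : ℝ) * arcLen a b < n :=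
    mul_lt_of_lt_one_right (by exact_mod_cast hn) (arcLen_lt_one a b)
  rw [ncard_openArc_inter_nsmul_eq_ceil hn hy, Nat.ceil_eq_iff hn.ne', Nat.cast_pred hn]
  constructor <;> linarith

lemma ncard_openArc_inter_nsmul_of_notMem (hn : 2 ≤ n) (hy : y ≠ n • a)
    (himage : arcLen (n • a) (n • b) = n * arcLen a b - (n - 1))
    (hmem : y ∉ openArc (n • a) (n • b)) :
    {x | x ∈ openArc a b ∧ n • x = y}.ncard = n - 1 := by
  rw [mem_openArc_iff, himage, not_and, not_lt] at hmem
  have hs := hmem (arcLen_pos_iff.mpr hy.symm)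
  have hlong : (n : ℝ) - 1 ≤ n * arcLen a b := by linarith [arcLen_nonneg (n • a) (n • b)]
  have hs1 := arcLen_lt_one (n • a) y
  rw [ncard_openArc_inter_nsmul_eq_ceil (by omega) hy, Nat.ceil_eq_iff (by omega),
    Nat.cast_pred (by omega), Nat.cast_pred (by omega)]
  constructor <;> linarith

end Counting

theorem unicritical_arc_covering_general (N : ℕ) (d : ℕ → ℕ) (hd : ∀ m, 1 ≤ m → 2 ≤ d m)
    (A : ℕ → Set UnitAddCircle) (hA : IsFormalPortrait N d A) (m : ℕ)
    (a b : UnitAddCircle) (hab : IsComplArc (A m) a b)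
    (huniq : ∀ a' b' : UnitAddCircle, IsComplArc (A m) a' b' →
      1 / (d (m + 1) : ℝ) < arcLen a' b' → a' = a ∧ b' = b) :
    1 - 1 / (d (m + 1) : ℝ) < arcLen a b ∧
    ∀ y : UnitAddCircle, y ∉ A (m + 1) →
      (y ∈ openArc (d (m + 1) • a) (d (m + 1) • b) →
        {x | x ∈ openArc a b ∧ d (m + 1) • x = y}.ncard = d (m + 1)) ∧
      (y ∉ openArc (d (m + 1) • a) (d (m + 1) • b) →
        {x | x ∈ openArc a b ∧ d (m + 1) • x = y}.ncard = d (m + 1) - 1) := by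
  obtain ⟨hfin, -, hbij, hcyc⟩ := hA m
  have hn : 2 ≤ d (m + 1) := hd (m + 1) (by omega)
  have himage := arcLen_nsmul_of_unique_critical hfin (by omega) hbij.injOn hcyc hab huniq
  have hpos := arcLen_pos_iff.mpr (hbij.injOn.ne hab.2.1 hab.2.2.1 hab.1)
  refine ⟨?_, fun y hy => ?_⟩
  · rw [sub_lt_comm, lt_div_iff₀ (by positivity)]
    linarith
  · have hya : y ≠ d (m + 1) • a := fun h => hy (h ▸ hbij.mapsTo hab.2.1)
    exact ⟨ncard_openArc_inter_nsmul_of_mem (by omega) hya himage,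
      ncard_openArc_inter_nsmul_of_notMem hn hya himage⟩

/-- If `A m` has exactly one critical complementary arc `I = (a,b)` of length
`ℓ`, then `ℓ > 1 − 1/d_{m+1}`, and for every `y ∉ A (m+1)` the number of
`x ∈ I` with `d_{m+1}·x = y` is `d_{m+1}` if `y ∈ (d_{m+1}·a, d_{m+1}·b)`
and `d_{m+1} − 1` otherwise. -/
theorem unicritical_arc_covering (N : ℕ) (hN : 2 ≤ N) (d : ℕ → ℕ) (hd : ∀ m, 1 ≤ m → 2 ≤ d m)
    (A : ℕ → Set UnitAddCircle) (hA : IsFormalPortrait N d A) (m : ℕ)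
    (a b : UnitAddCircle) (hab : IsComplArc (A m) a b)
    (hcrit : 1 / (d (m + 1) : ℝ) < arcLen a b)
    (huniq : ∀ a' b' : UnitAddCircle, IsComplArc (A m) a' b' →
      1 / (d (m + 1) : ℝ) < arcLen a' b' → a' = a ∧ b' = b) :
    1 - 1 / (d (m + 1) : ℝ) < arcLen a b ∧
    ∀ y : UnitAddCircle, y ∉ A (m + 1) →
      (y ∈ openArc (d (m + 1) • a) (d (m + 1) • b) →
        {x | x ∈ openArc a b ∧ d (m + 1) • x = y}.ncard = d (m + 1)) ∧
      (y ∉ openArc (d (m + 1) • a) (d (m + 1) • b) →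
        {x | x ∈ openArc a b ∧ d (m + 1) • x = y}.ncard = d (m + 1) - 1) :=
  unicritical_arc_covering_general N d hd A hA m a b hab huniq
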